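/- arXiv:math/0501300 — 3 statements merged into one kernel-verified Lean document; each statement's English description precedes it below -/
import Mathlib

section
/- Let f_1, f_2 : (0,∞) → ℝ be twice differentiable on an interval (a,b) with f_1(1) = f_2(1) = 0 and 1 ∈ (a,b), and suppose there are real constants 0 ≤ m < M such that f_2''(x) > 0 and m ≤ f_1''(x)/f_2''(x) ≤ M for all x ∈ (a,b). Then for all P, Q ∈ Γ_n with p_i/q_i ∈ (a,b) for every i, one has m · C_{f_2}(P||Q) ≤ C_{f_1}(P||Q) ≤ M · C_{f_2}(P||Q). -/
/-!
Subtracting `m f₂` from `f₁` (resp. `f₁` from `M f₂`) gives a function with nonnegative second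
derivative on `(a, b)`, hence convex there, which vanishes at `1`. By Jensen's inequality with
weights `qᵢ` at the points `pᵢ / qᵢ ∈ (a, b)`, whose barycentre is `∑ pᵢ = 1`, the Csiszár
divergence of a convex function vanishing at `1` is nonnegative; linearity of `C_f` in `f`
turns this into the two bounds.
-/

open Finset

section Csiszar

variable {ι : Type*} [Fintype ι]

noncomputable def csiszarDiv (f : ℝ → ℝ) (p q : ι → ℝ) : ℝ := ∑ i, q i * f (p i / q i)

lemma csiszarDiv_sub (f g : ℝ → ℝ) (p q : ι → ℝ) :
    csiszarDiv (fun x => f x - g x) p q = csiszarDiv f p q - csiszarDiv g p q := by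
  simp only [csiszarDiv, mul_sub, sum_sub_distrib]

lemma csiszarDiv_const_mul (c : ℝ) (f : ℝ → ℝ) (p q : ι → ℝ) :
    csiszarDiv (fun x => c * f x) p q = c * csiszarDiv f p q := by
  simp only [csiszarDiv, mul_sum]
  exact sum_congr rfl fun i _ => mul_left_comm _ _ _

lemma ConvexOn.csiszarDiv_nonneg {s : Set ℝ} {f : ℝ → ℝ} (hf : ConvexOn ℝ s f) (hf1 : f 1 = 0)
    {p q : ι → ℝ} (hq : ∀ i, 0 < q i) (hp1 : ∑ i, p i = 1) (hq1 : ∑ i, q i = 1)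
    (hmem : ∀ i, p i / q i ∈ s) :
    0 ≤ csiszarDiv f p q := by
  have hbary : ∑ i, q i • (p i / q i) = 1 := by
    simp only [smul_eq_mul, fun i => mul_div_cancel₀ (p i) (hq i).ne', hp1]
  have hjensen := hf.map_sum_le (fun i _ => (hq i).le) hq1 (fun i _ => hmem i)
  rw [hbary, hf1] at hjensen
  simpa [csiszarDiv] using hjensen

end Csiszar

lemma differentiableAt_const_mul_and_deriv {f : ℝ → ℝ} {x : ℝ} (c : ℝ)
    (hf : DifferentiableAt ℝ f x ∧ DifferentiableAt ℝ (deriv f) x) :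
    DifferentiableAt ℝ (fun y => c * f y) x ∧
      DifferentiableAt ℝ (deriv fun y => c * f y) x := by
  rw [deriv_const_mul_field']
  exact ⟨hf.1.const_mul c, hf.2.const_mul c⟩

lemma deriv2_const_mul (c : ℝ) (f : ℝ → ℝ) :
    deriv (deriv fun y => c * f y) = fun x => c * deriv (deriv f) x := by
  simp only [deriv_const_mul_field']

lemma convexOn_sub_of_deriv2_le {s : Set ℝ} (hs : IsOpen s) (hs' : Convex ℝ s) {f g : ℝ → ℝ}
    (hf : ∀ x ∈ s, DifferentiableAt ℝ f x ∧ DifferentiableAt ℝ (deriv f) x)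
    (hg : ∀ x ∈ s, DifferentiableAt ℝ g x ∧ DifferentiableAt ℝ (deriv g) x)
    (hle : ∀ x ∈ s, deriv (deriv g) x ≤ deriv (deriv f) x) :
    ConvexOn ℝ s (fun x => f x - g x) := by
  refine convexOn_of_hasDerivWithinAt2_nonneg hs' (f' := fun x => deriv f x - deriv g x)
    (f'' := fun x => deriv (deriv f) x - deriv (deriv g) x)
    (fun x hx => ((hf x hx).1.sub (hg x hx).1).continuousAt.continuousWithinAt) ?_ ?_ ?_ <;>
    rw [hs.interior_eq]
  · exact fun x hx => ((hf x hx).1.hasDerivAt.sub (hg x hx).1.hasDerivAt).hasDerivWithinAt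
  · exact fun x hx => ((hf x hx).2.hasDerivAt.sub (hg x hx).2.hasDerivAt).hasDerivWithinAt
  · exact fun x hx => sub_nonneg.2 (hle x hx)

theorem stmt_2_general (a b : ℝ) (f₁ f₂ : ℝ → ℝ)
    (hf₁1 : f₁ 1 = 0) (hf₂1 : f₂ 1 = 0)
    (hd₁ : ∀ x ∈ Set.Ioo a b, DifferentiableAt ℝ f₁ x ∧ DifferentiableAt ℝ (deriv f₁) x)
    (hd₂ : ∀ x ∈ Set.Ioo a b, DifferentiableAt ℝ f₂ x ∧ DifferentiableAt ℝ (deriv f₂) x)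
    (m M : ℝ)
    (hpos : ∀ x ∈ Set.Ioo a b, 0 < deriv (deriv f₂) x)
    (hratio : ∀ x ∈ Set.Ioo a b,
      m ≤ deriv (deriv f₁) x / deriv (deriv f₂) x ∧
        deriv (deriv f₁) x / deriv (deriv f₂) x ≤ M)
    (n : ℕ) (p q : Fin n → ℝ)
    (hq : ∀ i, 0 < q i)
    (hp1 : ∑ i, p i = 1) (hq1 : ∑ i, q i = 1)
    (hratio_mem : ∀ i, p i / q i ∈ Set.Ioo a b) :
    m * ∑ i, q i * f₂ (p i / q i) ≤ ∑ i, q i * f₁ (p i / q i) ∧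
      ∑ i, q i * f₁ (p i / q i) ≤ M * ∑ i, q i * f₂ (p i / q i) := by
  show m * csiszarDiv f₂ p q ≤ csiszarDiv f₁ p q ∧ csiszarDiv f₁ p q ≤ M * csiszarDiv f₂ p q
  have hlower : ∀ x ∈ Set.Ioo a b, deriv (deriv fun y => m * f₂ y) x ≤ deriv (deriv f₁) x :=
    fun x hx => by rw [deriv2_const_mul]; exact (le_div_iff₀ (hpos x hx)).1 (hratio x hx).1
  have hupper : ∀ x ∈ Set.Ioo a b, deriv (deriv f₁) x ≤ deriv (deriv fun y => M * f₂ y) x :=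
    fun x hx => by rw [deriv2_const_mul]; exact (div_le_iff₀ (hpos x hx)).1 (hratio x hx).2
  have h₁ := (convexOn_sub_of_deriv2_le isOpen_Ioo (convex_Ioo a b) hd₁
    (fun x hx => differentiableAt_const_mul_and_deriv m (hd₂ x hx)) hlower).csiszarDiv_nonneg
      (by simp [hf₁1, hf₂1]) hq hp1 hq1 hratio_mem
  have h₂ := (convexOn_sub_of_deriv2_le isOpen_Ioo (convex_Ioo a b)
    (fun x hx => differentiableAt_const_mul_and_deriv M (hd₂ x hx)) hd₁ hupper).csiszarDiv_nonneg
      (by simp [hf₁1, hf₂1]) hq hp1 hq1 hratio_mem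
  rw [csiszarDiv_sub, csiszarDiv_const_mul] at h₁ h₂
  exact ⟨by linarith, by linarith⟩

/-- Bounds between two Csiszár f-divergences in terms of bounds on the ratio of
second derivatives of the generating functions. -/
theorem stmt_2 (a b : ℝ) (f₁ f₂ : ℝ → ℝ)
    (h1 : (1 : ℝ) ∈ Set.Ioo a b) (hf₁1 : f₁ 1 = 0) (hf₂1 : f₂ 1 = 0)
    (hd₁ : ∀ x ∈ Set.Ioo a b, DifferentiableAt ℝ f₁ x ∧ DifferentiableAt ℝ (deriv f₁) x)
    (hd₂ : ∀ x ∈ Set.Ioo a b, DifferentiableAt ℝ f₂ x ∧ DifferentiableAt ℝ (deriv f₂) x)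
    (m M : ℝ) (hm : 0 ≤ m) (hmM : m < M)
    (hpos : ∀ x ∈ Set.Ioo a b, 0 < deriv (deriv f₂) x)
    (hratio : ∀ x ∈ Set.Ioo a b,
      m ≤ deriv (deriv f₁) x / deriv (deriv f₂) x ∧
        deriv (deriv f₁) x / deriv (deriv f₂) x ≤ M)
    (n : ℕ) (hn : 2 ≤ n) (p q : Fin n → ℝ)
    (hp : ∀ i, 0 < p i) (hq : ∀ i, 0 < q i)
    (hp1 : ∑ i, p i = 1) (hq1 : ∑ i, q i = 1)
    (hratio_mem : ∀ i, p i / q i ∈ Set.Ioo a b) :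
    m * ∑ i, q i * f₂ (p i / q i) ≤ ∑ i, q i * f₁ (p i / q i) ∧
      ∑ i, q i * f₁ (p i / q i) ≤ M * ∑ i, q i * f₂ (p i / q i) :=
  stmt_2_general a b f₁ f₂ hf₁1 hf₂1 hd₁ hd₂ m M hpos hratio n p q hq hp1 hq1 hratio_mem
end

section
/- Let s, t ∈ ℝ with s + t ≥ 1 and t ≥ −1. Then for all P, Q ∈ Γ_n with r ≤ p_i/q_i ≤ R for all i: (1/(4R^{t+1}))((R+1)/(2R))^{s−2} Φ_t(P||Q) ≤ Ω_s(P||Q) ≤ (1/(4r^{t+1}))((r+1)/(2r))^{s−2} Φ_t(P||Q). -/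
open Real Finset

/-- Relative information of type `s` (generalized Kullback-Leibler divergence). -/
noncomputable def Phi (n : ℕ) (s : ℝ) (p q : Fin n → ℝ) : ℝ :=
  if s = 0 then ∑ i, q i * Real.log (q i / p i)
  else if s = 1 then ∑ i, p i * Real.log (p i / q i)
  else (s * (s - 1))⁻¹ * ((∑ i, (p i) ^ s * (q i) ^ (1 - s)) - 1)

/-- Unified relative JS and AG divergence of type `s`. -/
noncomputable def Omega (n : ℕ) (s : ℝ) (p q : Fin n → ℝ) : ℝ :=
  if s = 0 then ∑ i, p i * Real.log (2 * p i / (p i + q i))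
  else if s = 1 then ∑ i, ((p i + q i) / 2) * Real.log ((p i + q i) / (2 * p i))
  else (s * (s - 1))⁻¹ * ((∑ i, p i * ((p i + q i) / (2 * p i)) ^ s) - 1)

/-- Relative J-divergence of type `s`. -/
noncomputable def zeta (n : ℕ) (s : ℝ) (p q : Fin n → ℝ) : ℝ :=
  if s = 1 then ∑ i, (p i - q i) * Real.log ((p i + q i) / (2 * q i))
  else (s - 1)⁻¹ * ∑ i, (p i - q i) * ((p i + q i) / (2 * q i)) ^ (s - 1)

/-!
Both divergences are `f`-divergences `∑ qᵢ f (pᵢ / qᵢ)` whose generators vanish at `1`. The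
generator `φ_t` of `Φ_t` has second derivative `x ^ (t - 2)`. Since `Ω_s(P‖Q) = Φ_s(M‖P)` with
`M = (P + Q) / 2`, the generator of `Ω_s` is `ω_s(x) = x φ_s((x + 1) / (2x))`, and its second
derivative is `ρ(x) x ^ (t - 2)` with `ρ(x) = ((x + 1) / (2x)) ^ (s - 2) / (4 x ^ (t + 1))`.
As `ρ(x) = ((x + 1) / (2x)) ^ (s + t - 1) ((x + 1) / 2) ^ (-(t + 1)) / 4`, `ρ` decreases when
`s + t ≥ 1` and `t ≥ -1`. So on `[r, R]` the generators `ω_s - ρ(R) φ_t` and `ρ(r) φ_t - ω_s`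
are convex and vanish at `1`, and by Jensen's inequality their divergences are nonnegative.
-/

open Set

section FDivergence

variable {ι : Type*} [Fintype ι]

noncomputable def fDiv (f : ℝ → ℝ) (p q : ι → ℝ) : ℝ := ∑ i, q i * f (p i / q i)

theorem fDiv_const_mul (c : ℝ) (f : ℝ → ℝ) (p q : ι → ℝ) :
    fDiv (fun x => c * f x) p q = c * fDiv f p q := by
  simp only [fDiv, Finset.mul_sum]
  exact Finset.sum_congr rfl fun i _ => by ring

theorem fDiv_nonneg {f : ℝ → ℝ} {D : Set ℝ} (hf : ConvexOn ℝ D f) (hf1 : f 1 = 0)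
    {p q : ι → ℝ} (hq : ∀ i, 0 < q i) (hp1 : ∑ i, p i = 1) (hq1 : ∑ i, q i = 1)
    (hpq : ∀ i, p i / q i ∈ D) : 0 ≤ fDiv f p q := by
  have hmean : ∑ i, q i • (p i / q i) = 1 := by
    simpa only [smul_eq_mul, mul_div_cancel₀ _ (hq _).ne'] using hp1
  calc 0 = f (∑ i, q i • (p i / q i)) := by rw [hmean, hf1]
    _ ≤ ∑ i, q i • f (p i / q i) := hf.map_sum_le (fun i _ => (hq i).le) hq1 fun i _ => hpq i
    _ = fDiv f p q := rfl

theorem convexOn_of_hasDerivAt2_nonneg {D : Set ℝ} (hD : Convex ℝ D) {f f' f'' : ℝ → ℝ}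
    (hf : ∀ x ∈ D, HasDerivAt f (f' x) x) (hf' : ∀ x ∈ D, HasDerivAt f' (f'' x) x)
    (hf'' : ∀ x ∈ D, 0 ≤ f'' x) : ConvexOn ℝ D f :=
  convexOn_of_hasDerivWithinAt2_nonneg hD
    (fun x hx => (hf x hx).continuousAt.continuousWithinAt)
    (fun x hx => (hf x (interior_subset hx)).hasDerivWithinAt)
    (fun x hx => (hf' x (interior_subset hx)).hasDerivWithinAt)
    (fun x hx => hf'' x (interior_subset hx))

theorem fDiv_le_fDiv_of_deriv2_le {f f' f'' g g' g'' : ℝ → ℝ} {D : Set ℝ} (hD : Convex ℝ D)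
    (hf : ∀ x ∈ D, HasDerivAt f (f' x) x) (hf' : ∀ x ∈ D, HasDerivAt f' (f'' x) x)
    (hg : ∀ x ∈ D, HasDerivAt g (g' x) x) (hg' : ∀ x ∈ D, HasDerivAt g' (g'' x) x)
    (hfg : ∀ x ∈ D, f'' x ≤ g'' x) (h1 : f 1 = g 1)
    {p q : ι → ℝ} (hq : ∀ i, 0 < q i) (hp1 : ∑ i, p i = 1) (hq1 : ∑ i, q i = 1)
    (hpq : ∀ i, p i / q i ∈ D) : fDiv f p q ≤ fDiv g p q := by
  have hconv : ConvexOn ℝ D fun x => g x - f x :=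
    convexOn_of_hasDerivAt2_nonneg hD (fun x hx => (hg x hx).sub (hf x hx))
      (fun x hx => (hg' x hx).sub (hf' x hx)) fun x hx => sub_nonneg.2 (hfg x hx)
  have := fDiv_nonneg hconv (sub_eq_zero.2 h1.symm) hq hp1 hq1 hpq
  simpa only [fDiv, mul_sub, Finset.sum_sub_distrib, sub_nonneg] using this

end FDivergence

noncomputable def phiGen (t x : ℝ) : ℝ :=
  if t = 0 then -Real.log x
  else if t = 1 then x * Real.log x
  else (t * (t - 1))⁻¹ * (x ^ t - 1)

noncomputable def phiGenDeriv (t x : ℝ) : ℝ :=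
  if t = 0 then -x⁻¹
  else if t = 1 then Real.log x + 1
  else (t - 1)⁻¹ * x ^ (t - 1)

theorem phiGen_one (t : ℝ) : phiGen t 1 = 0 := by
  unfold phiGen
  split_ifs <;> simp

theorem hasDerivAt_phiGen (t : ℝ) {x : ℝ} (hx : 0 < x) :
    HasDerivAt (phiGen t) (phiGenDeriv t x) x := by
  unfold phiGen phiGenDeriv
  split_ifs with h0 h1
  · exact (Real.hasDerivAt_log hx.ne').neg
  · refine ((hasDerivAt_id x).mul (Real.hasDerivAt_log hx.ne')).congr_deriv ?_
    simp [hx.ne']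
  · refine (((Real.hasDerivAt_rpow_const (p := t) (Or.inl hx.ne')).sub_const 1).const_mul
      (t * (t - 1))⁻¹).congr_deriv ?_
    have : t - 1 ≠ 0 := sub_ne_zero.2 h1
    field_simp

theorem hasDerivAt_phiGenDeriv (t : ℝ) {x : ℝ} (hx : 0 < x) :
    HasDerivAt (phiGenDeriv t) (x ^ (t - 2)) x := by
  unfold phiGenDeriv
  split_ifs with h0 h1
  · refine (hasDerivAt_inv hx.ne').neg.congr_deriv ?_
    rw [h0, zero_sub, Real.rpow_neg hx.le, Real.rpow_two, neg_neg]
  · refine ((Real.hasDerivAt_log hx.ne').add_const 1).congr_deriv ?_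
    rw [h1, show (1 : ℝ) - 2 = -1 by norm_num, Real.rpow_neg_one]
  · refine ((Real.hasDerivAt_rpow_const (p := t - 1) (Or.inl hx.ne')).const_mul
      (t - 1)⁻¹).congr_deriv ?_
    have : t - 1 ≠ 0 := sub_ne_zero.2 h1
    rw [sub_sub, one_add_one_eq_two]
    field_simp

section MidTransform

noncomputable def midRatio (x : ℝ) : ℝ := (x + 1) / (2 * x)

noncomputable def midTransform (f : ℝ → ℝ) (x : ℝ) : ℝ := x * f (midRatio x)

noncomputable def midTransformDeriv (f f' : ℝ → ℝ) (x : ℝ) : ℝ :=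
  f (midRatio x) - f' (midRatio x) / (2 * x)

theorem midRatio_pos {x : ℝ} (hx : 0 < x) : 0 < midRatio x := by
  unfold midRatio; positivity

theorem midRatio_one : midRatio 1 = 1 := by norm_num [midRatio]

theorem midTransform_one (f : ℝ → ℝ) : midTransform f 1 = f 1 := by
  simp [midTransform, midRatio_one]

theorem hasDerivAt_midRatio {x : ℝ} (hx : x ≠ 0) : HasDerivAt midRatio (-1 / (2 * x ^ 2)) x := by
  refine (((hasDerivAt_id x).add_const 1).div ((hasDerivAt_id x).const_mul 2)
    (mul_ne_zero two_ne_zero hx)).congr_deriv ?_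
  simp only [id_eq]
  field_simp
  ring

variable {f f' f'' : ℝ → ℝ} {x : ℝ}

theorem hasDerivAt_midTransform (hx : x ≠ 0) (hf : HasDerivAt f (f' (midRatio x)) (midRatio x)) :
    HasDerivAt (midTransform f) (midTransformDeriv f f' x) x := by
  refine ((hasDerivAt_id x).mul (hf.comp x (hasDerivAt_midRatio hx))).congr_deriv ?_
  simp only [midTransformDeriv, id_eq, Function.comp_apply]
  field_simp
  ring

theorem hasDerivAt_midTransformDeriv (hx : x ≠ 0)
    (hf : HasDerivAt f (f' (midRatio x)) (midRatio x))
    (hf' : HasDerivAt f' (f'' (midRatio x)) (midRatio x)) :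
    HasDerivAt (midTransformDeriv f f') (f'' (midRatio x) / (4 * x ^ 3)) x := by
  refine ((hf.comp x (hasDerivAt_midRatio hx)).sub ((hf'.comp x (hasDerivAt_midRatio hx)).div
    ((hasDerivAt_id x).const_mul 2) (mul_ne_zero two_ne_zero hx))).congr_deriv ?_
  simp only [id_eq, Function.comp_apply]
  field_simp
  ring

theorem fDiv_midpoint {ι : Type*} [Fintype ι] (f : ℝ → ℝ) {p q : ι → ℝ} (hp : ∀ i, 0 < p i)
    (hq : ∀ i, 0 < q i) : fDiv f (fun i => (p i + q i) / 2) p = fDiv (midTransform f) p q := by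
  refine Finset.sum_congr rfl fun i _ => ?_
  have hmid : midRatio (p i / q i) = (p i + q i) / 2 / p i := by
    unfold midRatio
    field_simp [(hp i).ne', (hq i).ne']
  rw [midTransform, hmid, ← mul_assoc, mul_div_cancel₀ _ (hq i).ne']

end MidTransform

section Divergences

variable {n : ℕ} {p q : Fin n → ℝ}

theorem Phi_eq_fDiv (t : ℝ) (hp : ∀ i, 0 ≤ p i) (hq : ∀ i, 0 < q i) (hq1 : ∑ i, q i = 1) :
    Phi n t p q = fDiv (phiGen t) p q := by
  unfold Phi fDiv phiGen
  split_ifs with h0 h1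
  · exact Finset.sum_congr rfl fun i _ => by rw [← inv_div, Real.log_inv, mul_neg]
  · exact Finset.sum_congr rfl fun i _ => by rw [← mul_assoc, mul_div_cancel₀ _ (hq i).ne']
  · have hterm : ∀ i, q i * ((t * (t - 1))⁻¹ * ((p i / q i) ^ t - 1)) =
        (t * (t - 1))⁻¹ * (p i ^ t * q i ^ (1 - t)) - (t * (t - 1))⁻¹ * q i := fun i => by
      have hqt : 0 < q i ^ t := Real.rpow_pos_of_pos (hq i) t
      rw [Real.div_rpow (hp i) (hq i).le, Real.rpow_sub (hq i), Real.rpow_one]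
      field_simp
    rw [Finset.sum_congr rfl fun i _ => hterm i, Finset.sum_sub_distrib, ← Finset.mul_sum,
      ← Finset.mul_sum, hq1, mul_sub, mul_one]

theorem Omega_eq_fDiv_midpoint (s : ℝ) (hp : ∀ i, 0 < p i) (hp1 : ∑ i, p i = 1) :
    Omega n s p q = fDiv (phiGen s) (fun i => (p i + q i) / 2) p := by
  unfold Omega fDiv phiGen
  split_ifs with h0 h1
  · refine Finset.sum_congr rfl fun i _ => ?_
    rw [← Real.log_inv, inv_div, div_div_eq_mul_div, mul_comm (p i) 2]
  · refine Finset.sum_congr rfl fun i _ => ?_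
    rw [← mul_assoc, mul_div_cancel₀ _ (hp i).ne', div_div]
  · have hterm : ∀ i, p i * ((s * (s - 1))⁻¹ * (((p i + q i) / 2 / p i) ^ s - 1)) =
        (s * (s - 1))⁻¹ * (p i * ((p i + q i) / (2 * p i)) ^ s) - (s * (s - 1))⁻¹ * p i :=
      fun i => by rw [div_div]; ring
    rw [Finset.sum_congr rfl fun i _ => hterm i, Finset.sum_sub_distrib, ← Finset.mul_sum,
      ← Finset.mul_sum, hp1, mul_sub, mul_one]

theorem Omega_eq_fDiv (s : ℝ) (hp : ∀ i, 0 < p i) (hq : ∀ i, 0 < q i) (hp1 : ∑ i, p i = 1) :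
    Omega n s p q = fDiv (midTransform (phiGen s)) p q := by
  rw [Omega_eq_fDiv_midpoint s hp hp1, fDiv_midpoint _ hp hq]

end Divergences

section Rho

variable {s t x : ℝ}

noncomputable def rho (s t x : ℝ) : ℝ := 1 / (4 * x ^ (t + 1)) * midRatio x ^ (s - 2)

theorem rho_eq (hx : 0 < x) :
    rho s t x = midRatio x ^ (s + t - 1) * ((x + 1) / 2) ^ (-(t + 1)) / 4 := by
  have hsplit : midRatio x ^ (s - 2) = midRatio x ^ (s + t - 1) * midRatio x ^ (-(t + 1)) := by
    rw [← Real.rpow_add (midRatio_pos hx)]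
    ring_nf
  have hmid : midRatio x = (x + 1) / 2 / x := by rw [midRatio, div_div, mul_comm]
  have hxt : 0 < x ^ (t + 1) := Real.rpow_pos_of_pos hx _
  rw [rho, hsplit, hmid, Real.div_rpow (by positivity) hx.le (-(t + 1)),
    Real.rpow_neg hx.le]
  field_simp

theorem midRatio_le_midRatio {y : ℝ} (hx : 0 < x) (hxy : x ≤ y) : midRatio y ≤ midRatio x := by
  unfold midRatio
  rw [div_le_div_iff₀ (by linarith) (by linarith)]
  nlinarith

theorem rho_antitoneOn (hst : 1 ≤ s + t) (ht : -1 ≤ t) : AntitoneOn (rho s t) (Ioi 0) := by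
  rintro x (hx : 0 < x) y (hy : 0 < y) hxy
  rw [rho_eq hx, rho_eq hy]
  gcongr ?_ * ?_ / 4
  · exact Real.rpow_nonneg (midRatio_pos hx).le _
  · exact Real.rpow_le_rpow (midRatio_pos hy).le (midRatio_le_midRatio hx hxy) (by linarith)
  · exact Real.rpow_le_rpow_of_nonpos (by positivity) (by linarith) (by linarith)

theorem midRatio_rpow_div_eq_rho_mul (hx : 0 < x) :
    midRatio x ^ (s - 2) / (4 * x ^ 3) = rho s t x * x ^ (t - 2) := by
  have hcube : x ^ (t + 1) = x ^ (t - 2) * x ^ 3 := by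
    rw [← Real.rpow_natCast, ← Real.rpow_add hx]
    ring_nf
  have hxt : 0 < x ^ (t - 2) := Real.rpow_pos_of_pos hx _
  rw [rho, hcube]
  field_simp

end Rho

section Comparison

variable {s t x : ℝ}

theorem hasDerivAt_midTransform_phiGen (hx : 0 < x) :
    HasDerivAt (midTransform (phiGen s)) (midTransformDeriv (phiGen s) (phiGenDeriv s) x) x :=
  hasDerivAt_midTransform hx.ne' (hasDerivAt_phiGen s (midRatio_pos hx))

theorem hasDerivAt_midTransformDeriv_phiGen (hx : 0 < x) :
    HasDerivAt (midTransformDeriv (phiGen s) (phiGenDeriv s)) (rho s t x * x ^ (t - 2)) x := by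
  rw [← midRatio_rpow_div_eq_rho_mul hx]
  exact hasDerivAt_midTransformDeriv (f'' := fun y => y ^ (s - 2)) hx.ne'
    (hasDerivAt_phiGen s (midRatio_pos hx))
    (hasDerivAt_phiGenDeriv s (midRatio_pos hx))

variable {n : ℕ} {p q : Fin n → ℝ} {c : ℝ} {D : Set ℝ}

theorem mul_Phi_le_Omega (hD : Convex ℝ D) (hD0 : D ⊆ Ioi 0) (hc : ∀ x ∈ D, c ≤ rho s t x)
    (hp : ∀ i, 0 < p i) (hq : ∀ i, 0 < q i) (hp1 : ∑ i, p i = 1) (hq1 : ∑ i, q i = 1)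
    (hpq : ∀ i, p i / q i ∈ D) : c * Phi n t p q ≤ Omega n s p q := by
  rw [Phi_eq_fDiv t (fun i => (hp i).le) hq hq1, Omega_eq_fDiv s hp hq hp1, ← fDiv_const_mul]
  refine fDiv_le_fDiv_of_deriv2_le hD (f'' := fun x => c * x ^ (t - 2))
    (fun x hx => (hasDerivAt_phiGen t (hD0 hx)).const_mul c)
    (fun x hx => (hasDerivAt_phiGenDeriv t (hD0 hx)).const_mul c)
    (fun x hx => hasDerivAt_midTransform_phiGen (hD0 hx))
    (fun x hx => hasDerivAt_midTransformDeriv_phiGen (t := t) (hD0 hx))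
    (fun x hx => mul_le_mul_of_nonneg_right (hc x hx) (Real.rpow_nonneg (hD0 hx).le _))
    (by simp [phiGen_one, midTransform_one]) hq hp1 hq1 hpq

theorem Omega_le_mul_Phi (hD : Convex ℝ D) (hD0 : D ⊆ Ioi 0) (hc : ∀ x ∈ D, rho s t x ≤ c)
    (hp : ∀ i, 0 < p i) (hq : ∀ i, 0 < q i) (hp1 : ∑ i, p i = 1) (hq1 : ∑ i, q i = 1)
    (hpq : ∀ i, p i / q i ∈ D) : Omega n s p q ≤ c * Phi n t p q := by
  rw [Phi_eq_fDiv t (fun i => (hp i).le) hq hq1, Omega_eq_fDiv s hp hq hp1, ← fDiv_const_mul]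
  refine fDiv_le_fDiv_of_deriv2_le hD (g'' := fun x => c * x ^ (t - 2))
    (fun x hx => hasDerivAt_midTransform_phiGen (hD0 hx))
    (fun x hx => hasDerivAt_midTransformDeriv_phiGen (t := t) (hD0 hx))
    (fun x hx => (hasDerivAt_phiGen t (hD0 hx)).const_mul c)
    (fun x hx => (hasDerivAt_phiGenDeriv t (hD0 hx)).const_mul c)
    (fun x hx => mul_le_mul_of_nonneg_right (hc x hx) (Real.rpow_nonneg (hD0 hx).le _))
    (by simp [phiGen_one, midTransform_one]) hq hp1 hq1 hpq

end Comparison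

theorem stmt_4_general (s t : ℝ) (hst : 1 ≤ s + t) (ht : -1 ≤ t)
    (n : ℕ) (p q : Fin n → ℝ)
    (hp : ∀ i, 0 < p i) (hq : ∀ i, 0 < q i)
    (hp1 : ∑ i, p i = 1) (hq1 : ∑ i, q i = 1)
    (r R : ℝ) (hr : 0 < r)
    (hbound : ∀ i, r ≤ p i / q i ∧ p i / q i ≤ R) :
    (1 / (4 * R ^ (t + 1))) * ((R + 1) / (2 * R)) ^ (s - 2) * Phi n t p q ≤ Omega n s p q ∧
      Omega n s p q ≤ (1 / (4 * r ^ (t + 1))) * ((r + 1) / (2 * r)) ^ (s - 2) * Phi n t p q := by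
  have hD0 : Icc r R ⊆ Ioi 0 := fun x hx => hr.trans_le hx.1
  have hpq : ∀ i, p i / q i ∈ Icc r R := hbound
  have hanti := rho_antitoneOn hst ht
  exact ⟨mul_Phi_le_Omega (convex_Icc r R) hD0
      (fun x hx => hanti (hD0 hx) ((hD0 hx).trans_le hx.2) hx.2) hp hq hp1 hq1 hpq,
    Omega_le_mul_Phi (convex_Icc r R) hD0
      (fun x hx => hanti hr (hD0 hx) hx.1) hp hq hp1 hq1 hpq⟩

theorem stmt_4 (s t : ℝ) (hst : 1 ≤ s + t) (ht : -1 ≤ t)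
    (n : ℕ) (hn : 2 ≤ n) (p q : Fin n → ℝ)
    (hp : ∀ i, 0 < p i) (hq : ∀ i, 0 < q i)
    (hp1 : ∑ i, p i = 1) (hq1 : ∑ i, q i = 1)
    (r R : ℝ) (hr : 0 < r) (hrR : r ≤ R)
    (hbound : ∀ i, r ≤ p i / q i ∧ p i / q i ≤ R) :
    (1 / (4 * R ^ (t + 1))) * ((R + 1) / (2 * R)) ^ (s - 2) * Phi n t p q ≤ Omega n s p q ∧
      Omega n s p q ≤ (1 / (4 * r ^ (t + 1))) * ((r + 1) / (2 * r)) ^ (s - 2) * Phi n t p q :=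
  stmt_4_general s t hst ht n p q hp hq hp1 hq1 r R hr hbound
end

section
/- Let s, t ∈ ℝ with s ≥ −1 and t ≥ −1. Then for all P, Q ∈ Γ_n with r ≤ p_i/q_i ≤ R for all i: r^{t+1} ((r+1)/2)^{s−t} Ω_t(P||Q) ≤ Ω_s(Q||P) ≤ R^{t+1} ((R+1)/2)^{s−t} Ω_t(P||Q). -/
open Real Finset

/-!
With `x i = p i / q i`, both sides are f-divergences for the weights `q`:
`Ω_s(Q‖P) = ∑ q_i ψ_s(x_i)` and `Ω_t(P‖Q) = ∑ q_i x_i ψ_t(1 / x_i)`, where `ψ_s x = φ_s ((x + 1) / 2)`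
and `φ_s` generates the relative information of type `s`. The second derivative of `ψ_s` is
`x ^ (t + 1) * ((x + 1) / 2) ^ (s - t)` times that of the perspective `x ↦ x ψ_t(1 / x)`, and for
`s, t ≥ -1` this factor is increasing, so it lies between its values `m` at `r` and `M` at `R`.
Hence `ψ_s - m · x ψ_t(1 / x)` and `M · x ψ_t(1 / x) - ψ_s` are convex on `[r, R]`; both vanish at
`1 = ∑ q_i x_i`, and Jensen's inequality gives the two bounds.
-/

lemma hasDerivAt_mul_comp_inv {f : ℝ → ℝ} {f' x : ℝ} (hx : x ≠ 0) (hf : HasDerivAt f f' x⁻¹) :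
    HasDerivAt (fun y => y * f y⁻¹) (f x⁻¹ - x⁻¹ * f') x := by
  refine ((hasDerivAt_id x).mul (hf.comp x (hasDerivAt_inv hx))).congr_deriv ?_
  simp only [id, Function.comp_apply]
  field_simp
  ring

lemma hasDerivAt_sub_inv_mul_comp_inv {f f' : ℝ → ℝ} {f'' x : ℝ} (hx : x ≠ 0)
    (hf : HasDerivAt f (f' x⁻¹) x⁻¹) (hf' : HasDerivAt f' f'' x⁻¹) :
    HasDerivAt (fun y => f y⁻¹ - y⁻¹ * f' y⁻¹) (x⁻¹ ^ 3 * f'') x := by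
  have hinv := hasDerivAt_inv hx
  refine ((hf.comp x hinv).sub (hinv.mul (hf'.comp x hinv))).congr_deriv ?_
  simp only [Function.comp_apply]
  field_simp
  ring

/-- The generator of `Phi`: `Phi n s p q = ∑ i, q i * relInfoGen s (p i / q i)`. -/
noncomputable def relInfoGen (s u : ℝ) : ℝ :=
  if s = 0 then -log u
  else if s = 1 then u * log u
  else (s * (s - 1))⁻¹ * (u ^ s - 1)

-- The generic branch also covers `s = 0`, where `(0 - 1)⁻¹ * u ^ (0 - 1) = -u⁻¹`.
noncomputable def relInfoGenDeriv (s u : ℝ) : ℝ :=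
  if s = 1 then log u + 1 else (s - 1)⁻¹ * u ^ (s - 1)

lemma relInfoGen_one (s : ℝ) : relInfoGen s 1 = 0 := by
  unfold relInfoGen
  split_ifs <;> simp

lemma hasDerivAt_relInfoGen (s : ℝ) {u : ℝ} (hu : 0 < u) :
    HasDerivAt (relInfoGen s) (relInfoGenDeriv s u) u := by
  unfold relInfoGen relInfoGenDeriv
  by_cases h0 : s = 0
  · subst h0
    simp only [if_true, zero_ne_one, if_false]
    refine (hasDerivAt_log hu.ne').neg.congr_deriv ?_
    rw [zero_sub, rpow_neg_one]
    ring
  by_cases h1 : s = 1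
  · subst h1
    simp only [one_ne_zero, if_true, if_false]
    refine ((hasDerivAt_id u).mul (hasDerivAt_log hu.ne')).congr_deriv ?_
    simp [hu.ne']
  simp only [h0, h1, if_false]
  refine (((hasDerivAt_rpow_const (p := s) (Or.inl hu.ne')).sub_const 1).const_mul
    (s * (s - 1))⁻¹).congr_deriv ?_
  field_simp

lemma hasDerivAt_relInfoGenDeriv (s : ℝ) {u : ℝ} (hu : 0 < u) :
    HasDerivAt (relInfoGenDeriv s) (u ^ (s - 2)) u := by
  unfold relInfoGenDeriv
  by_cases h1 : s = 1
  · subst h1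
    simp only [if_true]
    refine ((hasDerivAt_log hu.ne').add_const 1).congr_deriv ?_
    norm_num [rpow_neg_one]
  simp only [h1, if_false]
  have hs : s - 1 ≠ 0 := sub_ne_zero.2 h1
  refine ((hasDerivAt_rpow_const (p := s - 1) (Or.inl hu.ne')).const_mul
    (s - 1)⁻¹).congr_deriv ?_
  rw [sub_sub, one_add_one_eq_two]
  field_simp

lemma Omega_eq_sum_mul_relInfoGen (n : ℕ) (s : ℝ) {p : Fin n → ℝ} (q : Fin n → ℝ)
    (hp : ∀ i, p i ≠ 0) (hp1 : ∑ i, p i = 1) :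
    Omega n s p q = ∑ i, p i * relInfoGen s ((p i + q i) / (2 * p i)) := by
  unfold Omega relInfoGen
  by_cases h0 : s = 0
  · simp only [h0, if_true]
    refine sum_congr rfl fun i _ => ?_
    rw [← log_inv, inv_div]
  by_cases h1 : s = 1
  · simp only [h1, one_ne_zero, if_true, if_false]
    refine sum_congr rfl fun i _ => ?_
    have := hp i
    field_simp
  simp only [h0, h1, if_false]
  simp only [mul_sub, mul_one, mul_left_comm (p _), sum_sub_distrib, ← mul_sum, ← sum_mul, hp1,
    one_mul]

/-- `Omega n s p q = ∑ i, p i * omegaGen s (q i / p i)`. -/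
noncomputable def omegaGen (s x : ℝ) : ℝ := relInfoGen s ((x + 1) / 2)

lemma omegaGen_one (s : ℝ) : omegaGen s 1 = 0 := by
  simp [omegaGen, relInfoGen_one]

lemma hasDerivAt_omegaGen (s : ℝ) {x : ℝ} (hx : 0 < x + 1) :
    HasDerivAt (omegaGen s) (relInfoGenDeriv s ((x + 1) / 2) / 2) x := by
  have hu : 0 < (x + 1) / 2 := by positivity
  refine ((hasDerivAt_relInfoGen s hu).comp x
    (((hasDerivAt_id x).add_const 1).div_const 2)).congr_deriv ?_
  simp [div_eq_mul_inv]

lemma hasDerivAt_omegaGenDeriv (s : ℝ) {x : ℝ} (hx : 0 < x + 1) :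
    HasDerivAt (fun y => relInfoGenDeriv s ((y + 1) / 2) / 2) (((x + 1) / 2) ^ (s - 2) / 4) x := by
  have hu : 0 < (x + 1) / 2 := by positivity
  refine (((hasDerivAt_relInfoGenDeriv s hu).comp x
    (((hasDerivAt_id x).add_const 1).div_const 2)).div_const 2).congr_deriv ?_
  ring

lemma monotoneOn_rpow_mul_rpow_half_add_one {s t : ℝ} (hs : -1 ≤ s) (ht : -1 ≤ t) :
    MonotoneOn (fun x : ℝ => x ^ (t + 1) * ((x + 1) / 2) ^ (s - t)) (Set.Ioi 0) := by
  have factor : ∀ x : ℝ, 0 < x → x ^ (t + 1) * ((x + 1) / 2) ^ (s - t) =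
      (x / ((x + 1) / 2)) ^ (t + 1) * ((x + 1) / 2) ^ (s + 1) := by
    intro x hx
    have hv : 0 < (x + 1) / 2 := by positivity
    rw [div_rpow hx.le hv.le, div_mul_eq_mul_div, mul_div_assoc, ← rpow_sub hv]
    ring_nf
  intro x (hx : 0 < x) y (hy : 0 < y) hxy
  simp only [factor x hx, factor y hy]
  have hxy' : x / ((x + 1) / 2) ≤ y / ((y + 1) / 2) := by
    rw [div_le_div_iff₀ (by positivity) (by positivity)]
    nlinarith
  gcongr
  · linarith
  · linarith

lemma omegaGen_deriv2_eq_mul_perspective_deriv2 (s t : ℝ) {x : ℝ} (hx : 0 < x) :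
    ((x + 1) / 2) ^ (s - 2) / 4 =
      (x ^ (t + 1) * ((x + 1) / 2) ^ (s - t)) * (x⁻¹ ^ 3 * (((x⁻¹ + 1) / 2) ^ (t - 2) / 4)) := by
  have hv : 0 < (x + 1) / 2 := by positivity
  rw [show (x⁻¹ + 1) / 2 = (x + 1) / 2 / x by field_simp; ring, div_rpow hv.le hx.le, inv_pow,
    ← rpow_natCast, Nat.cast_ofNat]
  have hxt : x ^ (t + 1) = x ^ (t - 2) * x ^ (3 : ℝ) := by rw [← rpow_add hx]; ring_nf
  have hvs : ((x + 1) / 2) ^ (s - 2) = ((x + 1) / 2) ^ (s - t) * ((x + 1) / 2) ^ (t - 2) := by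
    rw [← rpow_add hv]; ring_nf
  rw [hxt, hvs]
  have := (rpow_pos_of_pos hx (t - 2)).ne'
  have := (rpow_pos_of_pos hx 3).ne'
  field_simp

lemma convexOn_omegaGen_add_perspective {s t a b r R : ℝ} (hr : 0 < r)
    (h : ∀ x ∈ Set.Icc r R, 0 ≤ a * (x ^ (t + 1) * ((x + 1) / 2) ^ (s - t)) + b) :
    ConvexOn ℝ (Set.Icc r R) (fun x => a * omegaGen s x + b * (x * omegaGen t x⁻¹)) := by
  set F' : ℝ → ℝ := fun x => a * (relInfoGenDeriv s ((x + 1) / 2) / 2) +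
    b * (omegaGen t x⁻¹ - x⁻¹ * (relInfoGenDeriv t ((x⁻¹ + 1) / 2) / 2))
  set F'' : ℝ → ℝ := fun x => a * (((x + 1) / 2) ^ (s - 2) / 4) +
    b * (x⁻¹ ^ 3 * (((x⁻¹ + 1) / 2) ^ (t - 2) / 4))
  have hF : ∀ x, 0 < x → HasDerivAt (fun x => a * omegaGen s x + b * (x * omegaGen t x⁻¹))
      (F' x) x := fun x hx =>
    ((hasDerivAt_omegaGen s (by positivity)).const_mul a).add
      ((hasDerivAt_mul_comp_inv hx.ne' (hasDerivAt_omegaGen t (by positivity))).const_mul b)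
  have hF' : ∀ x, 0 < x → HasDerivAt F' (F'' x) x := fun x hx =>
    ((hasDerivAt_omegaGenDeriv s (by positivity)).const_mul a).add
      ((hasDerivAt_sub_inv_mul_comp_inv hx.ne' (hasDerivAt_omegaGen t (by positivity))
        (hasDerivAt_omegaGenDeriv t (by positivity))).const_mul b)
  have hpos : ∀ x ∈ Set.Ioo r R, 0 < x := fun x hx => hr.trans hx.1
  refine convexOn_of_hasDerivWithinAt2_nonneg (f' := F') (f'' := F'') (convex_Icc r R)
    (fun x hx => (hF x (hr.trans_le hx.1)).continuousAt.continuousWithinAt) ?_ ?_ ?_ <;>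
    simp only [interior_Icc] <;> intro x hx
  · exact (hF x (hpos x hx)).hasDerivWithinAt
  · exact (hF' x (hpos x hx)).hasDerivWithinAt
  · have hx0 := hpos x hx
    have hfactor : F'' x = (a * (x ^ (t + 1) * ((x + 1) / 2) ^ (s - t)) + b) *
        (x⁻¹ ^ 3 * (((x⁻¹ + 1) / 2) ^ (t - 2) / 4)) := by
      simp only [F'', omegaGen_deriv2_eq_mul_perspective_deriv2 s t hx0]
      ring
    rw [hfactor]
    exact mul_nonneg (h x (Set.Ioo_subset_Icc_self hx)) (by positivity)

lemma mul_Omega_add_mul_Omega_nonneg {n : ℕ} {p q : Fin n → ℝ} {s t a b r R : ℝ}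
    (hp : ∀ i, 0 < p i) (hq : ∀ i, 0 < q i) (hp1 : ∑ i, p i = 1) (hq1 : ∑ i, q i = 1)
    (hr : 0 < r) (hbound : ∀ i, r ≤ p i / q i ∧ p i / q i ≤ R)
    (h : ∀ x ∈ Set.Icc r R, 0 ≤ a * (x ^ (t + 1) * ((x + 1) / 2) ^ (s - t)) + b) :
    0 ≤ a * Omega n s q p + b * Omega n t p q := by
  have hΩs : Omega n s q p = ∑ i, q i * omegaGen s (p i / q i) := by
    rw [Omega_eq_sum_mul_relInfoGen n s p (fun i => (hq i).ne') hq1]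
    refine sum_congr rfl fun i _ => ?_
    have := (hq i).ne'
    rw [omegaGen]
    congr 2
    field_simp
    ring
  have hΩt : Omega n t p q = ∑ i, q i * (p i / q i * omegaGen t (p i / q i)⁻¹) := by
    rw [Omega_eq_sum_mul_relInfoGen n t q (fun i => (hp i).ne') hp1]
    refine sum_congr rfl fun i _ => ?_
    have := (hp i).ne'
    rw [omegaGen, ← mul_assoc, mul_div_cancel₀ _ (hq i).ne']
    congr 2
    field_simp
    ring
  have hmean : ∑ i, q i • (p i / q i) = 1 := by
    simp only [smul_eq_mul]
    rw [← hp1]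
    exact sum_congr rfl fun i _ => mul_div_cancel₀ _ (hq i).ne'
  have jensen := (convexOn_omegaGen_add_perspective hr h).map_sum_le
    (fun i _ => (hq i).le) hq1 (fun i _ => hbound i)
  simp only [hmean, inv_one, omegaGen_one, mul_zero, add_zero] at jensen
  rw [hΩs, hΩt, mul_sum, mul_sum, ← sum_add_distrib]
  simpa only [smul_eq_mul, mul_add, mul_left_comm (q _)] using jensen

theorem stmt_11_general (s t : ℝ) (hs : -1 ≤ s) (ht : -1 ≤ t)
    (n : ℕ) (p q : Fin n → ℝ)
    (hp : ∀ i, 0 < p i) (hq : ∀ i, 0 < q i)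
    (hp1 : ∑ i, p i = 1) (hq1 : ∑ i, q i = 1)
    (r R : ℝ) (hr : 0 < r)
    (hbound : ∀ i, r ≤ p i / q i ∧ p i / q i ≤ R) :
    r ^ (t + 1) * ((r + 1) / 2) ^ (s - t) * Omega n t p q ≤ Omega n s q p ∧
      Omega n s q p ≤ R ^ (t + 1) * ((R + 1) / 2) ^ (s - t) * Omega n t p q := by
  have hmono := monotoneOn_rpow_mul_rpow_half_add_one hs ht
  constructor
  · have := mul_Omega_add_mul_Omega_nonneg (a := 1) (b := -(r ^ (t + 1) * ((r + 1) / 2) ^ (s - t)))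
      hp hq hp1 hq1 hr hbound fun x hx => by
        simpa [← sub_eq_add_neg] using hmono hr (hr.trans_le hx.1 : 0 < x) hx.1
    simpa [← sub_eq_add_neg] using this
  · have := mul_Omega_add_mul_Omega_nonneg (a := -1) (b := R ^ (t + 1) * ((R + 1) / 2) ^ (s - t))
      hp hq hp1 hq1 hr hbound fun x hx => by
        simpa [neg_add_eq_sub] using
          hmono (hr.trans_le hx.1 : 0 < x) (hr.trans_le (hx.1.trans hx.2) : 0 < R) hx.2
    simpa [neg_add_eq_sub] using this

theorem stmt_11 (s t : ℝ) (hs : -1 ≤ s) (ht : -1 ≤ t)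
    (n : ℕ) (hn : 2 ≤ n) (p q : Fin n → ℝ)
    (hp : ∀ i, 0 < p i) (hq : ∀ i, 0 < q i)
    (hp1 : ∑ i, p i = 1) (hq1 : ∑ i, q i = 1)
    (r R : ℝ) (hr : 0 < r) (hrR : r ≤ R)
    (hbound : ∀ i, r ≤ p i / q i ∧ p i / q i ≤ R) :
    r ^ (t + 1) * ((r + 1) / 2) ^ (s - t) * Omega n t p q ≤ Omega n s q p ∧
      Omega n s q p ≤ R ^ (t + 1) * ((R + 1) / 2) ^ (s - t) * Omega n t p q :=
  stmt_11_general s t hs ht n p q hp hq hp1 hq1 r R hr hbound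
end
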